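/- The transformation 𝒯 preserves and reflects the covariant-contravariant modal logic: for each LTS T with signature {A^r, A^l, A^bi}, every state p of T and every formula φ of the cc-modal logic over {A^r, A^l, A^bi}, p ⊨ φ in T if and only if p ⊨ 𝒯(φ) in 𝒯(T). -/
import Mathlib


/-- The three kinds of actions in a signature `{A^r, A^l, A^bi}`:
covariant (`A^r`), contravariant (`A^l`) and bivariant (`A^bi`). -/
inductive Kind : Type where
  | cov : Kind
  | con : Kind
  | bi : Kind
deriving DecidableEq

/-- A covariant-contravariant simulation over an LTS with state space `S` and
signature `sig : Act → Kind`. -/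
def IsCCSimK {S Act : Type} (sig : Act → Kind) (tr : S → Act → S → Prop)
    (R : S → S → Prop) : Prop :=
  ∀ p q, R p q →
    ((∀ a, (sig a = Kind.cov ∨ sig a = Kind.bi) →
        ∀ p', tr p a p' → ∃ q', tr q a q' ∧ R p' q') ∧
     (∀ a, (sig a = Kind.con ∨ sig a = Kind.bi) →
        ∀ q', tr q a q' → ∃ p', tr p a p' ∧ R p' q'))

/-- The covariant-contravariant simulation preorder `p ≲cc q` over an LTS with
signature `sig`. -/
def CCLEK {S Act : Type} (sig : Act → Kind) (tr : S → Act → S → Prop) (p q : S) : Prop :=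
  ∃ R, IsCCSimK sig tr R ∧ R p q

/-- The actions of the transformed systems `𝒯(T)`: `Sum.inl a` is an original
action `a ∈ A^r ∪ A^l`, while `Sum.inr (c, true)` is `c^r` and
`Sum.inr (c, false)` is `c^l` for a bivariant action `c ∈ A^bi`. -/
def barSig {Act : Type} (sig : Act → Kind) : Act ⊕ (Act × Bool) → Kind
  | .inl a => if sig a = Kind.con then Kind.con else Kind.cov
  | .inr (_, true) => Kind.cov
  | .inr (_, false) => Kind.con

/-- The transitions of `𝒯(T)`: transitions of `T` labelled in `A^r ∪ A^l` are
kept, and each transition `p →c p'` with `c ∈ A^bi` yields both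
`p →c^r p'` and `p →c^l p'`. -/
def trBar {S Act : Type} (sig : Act → Kind) (tr : S → Act → S → Prop) :
    S → Act ⊕ (Act × Bool) → S → Prop
  | p, .inl a, p' => tr p a p' ∧ (sig a = Kind.cov ∨ sig a = Kind.con)
  | p, .inr (c, _), p' => tr p c p' ∧ sig c = Kind.bi

/-- The covariant-contravariant modal logic over a signature
`sig : Act → Kind`: `φ ::= ⊥ | ⊤ | φ∧φ | φ∨φ | [b]φ | ⟨a⟩φ` with
`a ∈ A^r ∪ A^bi` and `b ∈ A^l ∪ A^bi`. -/
inductive FormulaS (Act : Type) (sig : Act → Kind) : Type where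
  | bot : FormulaS Act sig
  | top : FormulaS Act sig
  | and : FormulaS Act sig → FormulaS Act sig → FormulaS Act sig
  | or : FormulaS Act sig → FormulaS Act sig → FormulaS Act sig
  | box : {x : Act // sig x = Kind.con ∨ sig x = Kind.bi} →
      FormulaS Act sig → FormulaS Act sig
  | dia : {x : Act // sig x = Kind.cov ∨ sig x = Kind.bi} →
      FormulaS Act sig → FormulaS Act sig

/-- Satisfaction `p ⊨ φ` over an arbitrary LTS with signature `sig`. -/
def SatS {S Act : Type} {sig : Act → Kind} (tr : S → Act → S → Prop) :
    S → FormulaS Act sig → Prop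
  | _, .bot => False
  | _, .top => True
  | p, .and φ ψ => SatS tr p φ ∧ SatS tr p ψ
  | p, .or φ ψ => SatS tr p φ ∨ SatS tr p ψ
  | p, .box b φ => ∀ p', tr p b.1 p' → SatS tr p' φ
  | p, .dia a φ => ∃ p', tr p a.1 p' ∧ SatS tr p' φ

/-- The translation `𝒯` on formulae: modalities with actions in `A^r ∪ A^l`
are kept, `⟨c⟩` becomes `⟨c^r⟩` and `[c]` becomes `[c^l]` for `c ∈ A^bi`. -/
def trFormula {Act : Type} (sig : Act → Kind) :
    FormulaS Act sig → FormulaS (Act ⊕ (Act × Bool)) (barSig sig)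
  | .bot => .bot
  | .top => .top
  | .and φ ψ => .and (trFormula sig φ) (trFormula sig ψ)
  | .or φ ψ => .or (trFormula sig φ) (trFormula sig ψ)
  | .dia a φ =>
      if h : sig a.1 = Kind.cov then
        .dia ⟨Sum.inl a.1, Or.inl (by simp [barSig, h])⟩ (trFormula sig φ)
      else
        .dia ⟨Sum.inr (a.1, true), Or.inl rfl⟩ (trFormula sig φ)
  | .box b φ =>
      if h : sig b.1 = Kind.con then
        .box ⟨Sum.inl b.1, Or.inl (by simp [barSig, h])⟩ (trFormula sig φ)
      else
        .box ⟨Sum.inr (b.1, false), Or.inl rfl⟩ (trFormula sig φ)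

/-- The transformation `𝒯` preserves and reflects the covariant-contravariant
modal logic: for each LTS `T` with signature `{A^r, A^l, A^bi}`, every state
`p` of `T` and every formula `φ` over `{A^r, A^l, A^bi}`, `p ⊨ φ` in `T` iff
`p ⊨ 𝒯(φ)` in `𝒯(T)`. -/
theorem trFormula_preserves_reflects_sat {S Act : Type} [Fintype Act]
    (sig : Act → Kind) (tr : S → Act → S → Prop) (p : S) (φ : FormulaS Act sig) :
    SatS tr p φ ↔ SatS (trBar sig tr) p (trFormula sig φ) := by
  induction φ generalizing p with
  | bot => simp [SatS, trFormula]
  | top => simp [SatS, trFormula]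
  | and φ ψ ihφ ihψ => simp [SatS, trFormula, ihφ, ihψ]
  | or φ ψ ihφ ihψ => simp [SatS, trFormula, ihφ, ihψ]
  | box b φ ih =>
    rcases b with ⟨b, hb⟩
    by_cases h : sig b = Kind.con
    · simp only [trFormula, h, dif_pos, SatS, trBar]
      constructor
      · intro H p' ⟨htr, _⟩; exact (ih p').1 (H p' htr)
      · intro H p' htr; exact (ih p').2 (H p' ⟨htr, Or.inr trivial⟩)
    · have hbi : sig b = Kind.bi := hb.resolve_left h
      simp only [trFormula, h, dif_neg, not_false_iff, SatS, trBar]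
      constructor
      · intro H p' ⟨htr, _⟩; exact (ih p').1 (H p' htr)
      · intro H p' htr; exact (ih p').2 (H p' ⟨htr, hbi⟩)
  | dia a φ ih =>
    rcases a with ⟨a, ha⟩
    by_cases h : sig a = Kind.cov
    · simp only [trFormula, h, dif_pos, SatS, trBar]
      constructor
      · rintro ⟨p', htr, hφ⟩; exact ⟨p', ⟨htr, Or.inl trivial⟩, (ih p').1 hφ⟩
      · rintro ⟨p', ⟨htr, _⟩, hφ⟩; exact ⟨p', htr, (ih p').2 hφ⟩
    · have hbi : sig a = Kind.bi := ha.resolve_left h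
      simp only [trFormula, h, dif_neg, not_false_iff, SatS, trBar]
      constructor
      · rintro ⟨p', htr, hφ⟩; exact ⟨p', ⟨htr, hbi⟩, (ih p').1 hφ⟩
      · rintro ⟨p', ⟨htr, _⟩, hφ⟩; exact ⟨p', htr, (ih p').2 hφ⟩
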